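/- arXiv:2204.03171 — 10 statements merged into one kernel-verified Lean document; each statement's English description precedes it below -/
import Mathlib

section
/- Let (g, d_g) be a differential 3-Lie algebra of weight λ. Then L = g ∧ g with the Leibniz bracket [x₁∧x₂, y₁∧y₂]_F = [x₁,x₂,y₁]∧y₂ + y₁∧[x₁,x₂,y₂] and the linear map d_L(x∧y) = d_g(x)∧y + x∧d_g(y) + λ d_g(x)∧d_g(y) is a differential Leibniz algebra of weight λ, i.e. d_L([X,Y]_F) = [d_L X, Y]_F + [X, d_L Y]_F + λ[d_L X, d_L Y]_F. -/
/-- A 3-Lie algebra structure: skew-symmetric trilinear bracket satisfying the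
fundamental identity. -/
def IsThreeLie {k g : Type*} [Field k] [AddCommGroup g] [Module k g]
    (b : g →ₗ[k] g →ₗ[k] g →ₗ[k] g) : Prop :=
  (∀ x y z, b x y z = - b y x z) ∧ (∀ x y z, b x y z = - b x z y) ∧
  (∀ x₁ x₂ y₁ y₂ y₃, b x₁ x₂ (b y₁ y₂ y₃) =
    b (b x₁ x₂ y₁) y₂ y₃ + b y₁ (b x₁ x₂ y₂) y₃ + b y₁ y₂ (b x₁ x₂ y₃))

/-- `d` is a differential operator of weight `lam` for the bracket `b`. -/
def IsWeightedDiff {k g : Type*} [Field k] [AddCommGroup g] [Module k g]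
    (b : g →ₗ[k] g →ₗ[k] g →ₗ[k] g) (lam : k) (d : g →ₗ[k] g) : Prop :=
  ∀ x y z, d (b x y z) =
    b (d x) y z + b x (d y) z + b x y (d z)
    + lam • (b (d x) (d y) z + b x (d y) (d z) + b (d x) y (d z))
    + lam ^ 2 • b (d x) (d y) (d z)

/-- The wedge `x ∧ y` as an element of the exterior square `⋀[k]^2 g`. -/
noncomputable def wedge {k : Type*} [Field k] {g : Type*} [AddCommGroup g] [Module k g]
    (x y : g) : ⋀[k]^2 g :=
  ⟨ExteriorAlgebra.ιMulti k 2 ![x, y],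
    ExteriorAlgebra.ιMulti_range k 2 (Set.mem_range_self _)⟩


section AuxLemmas

variable {k : Type*} [Field k] {g : Type*} [AddCommGroup g] [Module k g]
  {N : Type*} [AddCommGroup N] [Module k N]

private lemma upd0 (x y z : g) : Function.update ![x, y] 0 z = ![z, y] := by
  ext i; fin_cases i <;> simp

private lemma upd1 (x y z : g) : Function.update ![x, y] 1 z = ![x, z] := by
  ext i; fin_cases i <;> simp

lemma wedge_add_left (x x' y : g) : wedge (k := k) (x + x') y = wedge x y + wedge x' y := by
  apply Subtype.ext
  simp only [Submodule.coe_add]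
  show ExteriorAlgebra.ιMulti k 2 ![x + x', y]
      = ExteriorAlgebra.ιMulti k 2 ![x, y] + ExteriorAlgebra.ιMulti k 2 ![x', y]
  rw [← upd0 x y (x + x'), AlternatingMap.map_update_add, upd0, upd0]

lemma wedge_add_right (x y y' : g) : wedge (k := k) x (y + y') = wedge x y + wedge x y' := by
  apply Subtype.ext
  simp only [Submodule.coe_add]
  show ExteriorAlgebra.ιMulti k 2 ![x, y + y']
      = ExteriorAlgebra.ιMulti k 2 ![x, y] + ExteriorAlgebra.ιMulti k 2 ![x, y']
  rw [← upd1 x y (y + y'), AlternatingMap.map_update_add, upd1, upd1]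

lemma wedge_smul_left (c : k) (x y : g) : wedge (k := k) (c • x) y = c • wedge x y := by
  apply Subtype.ext
  simp only [SetLike.val_smul]
  show ExteriorAlgebra.ιMulti k 2 ![c • x, y] = c • ExteriorAlgebra.ιMulti k 2 ![x, y]
  rw [← upd0 x y (c • x), AlternatingMap.map_update_smul, upd0]

lemma wedge_smul_right (c : k) (x y : g) : wedge (k := k) x (c • y) = c • wedge x y := by
  apply Subtype.ext
  simp only [SetLike.val_smul]
  show ExteriorAlgebra.ιMulti k 2 ![x, c • y] = c • ExteriorAlgebra.ιMulti k 2 ![x, y]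
  rw [← upd1 x y (c • y), AlternatingMap.map_update_smul, upd1]

lemma wedge_same (x : g) : wedge (k := k) x x = 0 := by
  apply Subtype.ext
  simp only [ZeroMemClass.coe_zero]
  exact AlternatingMap.map_eq_zero_of_eq _ ![x, x] (i := 0) (j := 1) rfl (by decide)

lemma wedge_antisymm (x y : g) : wedge (k := k) x y = - wedge y x := by
  have h := wedge_same (k := k) (x + y)
  rw [wedge_add_left, wedge_add_right, wedge_add_right, wedge_same, wedge_same] at h
  have h2 : wedge (k := k) x y + wedge y x = 0 := by
    rw [← h]; abel
  exact eq_neg_of_add_eq_zero_left h2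

set_option linter.unusedSectionVars false

/-- Alternating map on `Fin 2` from a bilinear map vanishing on the diagonal. -/
def twoAlt (B : g →ₗ[k] g →ₗ[k] N) (hB : ∀ x, B x x = 0) : g [⋀^Fin 2]→ₗ[k] N where
  toFun v := B (v 0) (v 1)
  map_update_add' m i x y := by
    fin_cases i <;>
      simp [Function.update_self, Function.update_of_ne]
  map_update_smul' m i c x := by
    fin_cases i <;>
      simp [Function.update_self, Function.update_of_ne]
  map_eq_zero_of_eq' v i j h hij := by
    have hv : v 0 = v 1 := by fin_cases i <;> fin_cases j <;> simp_all
    show B (v 0) (v 1) = 0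
    rw [hv]; exact hB _

@[simp] lemma twoAlt_apply (B : g →ₗ[k] g →ₗ[k] N) (hB : ∀ x, B x x = 0) (v : Fin 2 → g) :
    twoAlt B hB v = B (v 0) (v 1) := rfl

/-- Lift an alternating map on `Fin 2` to a linear map on the exterior square. -/
noncomputable def liftWedge (A : g [⋀^Fin 2]→ₗ[k] N) : (⋀[k]^2 g) →ₗ[k] N :=
  (ExteriorAlgebra.liftAlternating (Pi.single 2 A)).domRestrict _

@[simp] lemma liftWedge_wedge (A : g [⋀^Fin 2]→ₗ[k] N) (x y : g) :
    liftWedge A (wedge x y) = A ![x, y] := by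
  show ExteriorAlgebra.liftAlternating (Pi.single 2 A) (ExteriorAlgebra.ιMulti k 2 ![x, y])
      = A ![x, y]
  rw [ExteriorAlgebra.liftAlternating_apply_ιMulti]
  simp

/-- Induction principle: the exterior square is spanned by wedges. -/
lemma wedge_induction {P : (⋀[k]^2 g) → Prop} (hzero : P 0)
    (hw : ∀ x y : g, P (wedge x y)) (hadd : ∀ a b, P a → P b → P (a + b))
    (hsmul : ∀ (c : k) a, P a → P (c • a)) : ∀ X : ⋀[k]^2 g, P X := by
  have hspan := ExteriorAlgebra.ιMulti_span_fixedDegree k 2 (M := g)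
  have key : ∀ (x : ExteriorAlgebra k g)
      (hx : x ∈ Submodule.span k (Set.range (ExteriorAlgebra.ιMulti k 2 (M := g)))),
      P ⟨x, hspan ▸ hx⟩ := by
    intro x hx
    induction hx using Submodule.span_induction with
    | mem x hx =>
      obtain ⟨v, rfl⟩ := hx
      have hv : v = ![v 0, v 1] := by funext i; fin_cases i <;> rfl
      have heq : (⟨ExteriorAlgebra.ιMulti k 2 v, hspan ▸ Submodule.subset_span ⟨v, rfl⟩⟩ :
          ⋀[k]^2 g) = wedge (v 0) (v 1) := by
        apply Subtype.ext
        show ExteriorAlgebra.ιMulti k 2 v = ExteriorAlgebra.ιMulti k 2 ![v 0, v 1]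
        rw [← hv]
      exact heq ▸ hw (v 0) (v 1)
    | zero => exact hzero
    | add x hx y hy px py => exact hadd _ _ px py
    | smul c x hx px => exact hsmul c _ px
  rintro ⟨a, ha⟩
  exact key a (hspan ▸ ha)

lemma ext_wedge {f h : (⋀[k]^2 g) →ₗ[k] N}
    (H : ∀ x y : g, f (wedge x y) = h (wedge x y)) : f = h := by
  apply LinearMap.ext
  refine wedge_induction (by simp) H ?_ ?_
  · intro a b' pa pb; simp [map_add, pa, pb]
  · intro c a pa; simp [map_smul, pa]

/-- Derivation-type extension of a linear map to the exterior square. -/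
noncomputable def derW (f : g →ₗ[k] g) : (⋀[k]^2 g) →ₗ[k] (⋀[k]^2 g) :=
  liftWedge (twoAlt (LinearMap.mk₂ k (fun x y => wedge (f x) y + wedge x (f y))
    (fun x x' y => by simp only [map_add, wedge_add_left, wedge_add_right]; abel)
    (fun c x y => by simp only [map_smul, wedge_smul_left, wedge_smul_right, smul_add])
    (fun x y y' => by simp only [map_add, wedge_add_left, wedge_add_right]; abel)
    (fun c x y => by simp only [map_smul, wedge_smul_left, wedge_smul_right, smul_add]))
    (fun x => by
      show wedge (f x) x + wedge x (f x) = 0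
      rw [wedge_antisymm (f x) x]; abel))

@[simp] lemma derW_wedge (f : g →ₗ[k] g) (x y : g) :
    derW f (wedge x y) = wedge (f x) y + wedge x (f y) := by
  simp [derW]

/-- Square-type extension of a linear map to the exterior square. -/
noncomputable def sqW (f : g →ₗ[k] g) : (⋀[k]^2 g) →ₗ[k] (⋀[k]^2 g) :=
  liftWedge (twoAlt (LinearMap.mk₂ k (fun x y => wedge (f x) (f y))
    (fun x x' y => by simp only [map_add, wedge_add_left])
    (fun c x y => by simp only [map_smul, wedge_smul_left])
    (fun x y y' => by simp only [map_add, wedge_add_right])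
    (fun c x y => by simp only [map_smul, wedge_smul_right]))
    (fun x => wedge_same (f x)))

@[simp] lemma sqW_wedge (f : g →ₗ[k] g) (x y : g) :
    sqW f (wedge x y) = wedge (f x) (f y) := by
  exact liftWedge_wedge _ x y

lemma derW_add (f f' : g →ₗ[k] g) : derW (f + f') = derW f + derW f' := by
  apply ext_wedge
  intro x y
  simp only [derW_wedge, LinearMap.add_apply, wedge_add_left, wedge_add_right]
  abel

lemma derW_smul (c : k) (f : g →ₗ[k] g) : derW (c • f) = c • derW f := by
  apply ext_wedge
  intro x y
  simp only [derW_wedge, LinearMap.smul_apply, wedge_smul_left, wedge_smul_right, smul_add]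

lemma derW_zero : derW (0 : g →ₗ[k] g) = 0 := by
  apply ext_wedge
  intro x y
  have h0 : ∀ y : g, wedge (k := k) (0 : g) y = 0 := by
    intro y
    have := wedge_smul_left (0 : k) (0 : g) y
    simpa using this
  have h0' : ∀ x : g, wedge (k := k) x (0 : g) = 0 := by
    intro x
    have := wedge_smul_right (0 : k) x (0 : g)
    simpa using this
  simp [derW_wedge, h0, h0']

lemma wedge_zero_left (y : g) : wedge (k := k) (0 : g) y = 0 := by
  have := wedge_smul_left (0 : k) (0 : g) y
  simpa using this

lemma wedge_zero_right (x : g) : wedge (k := k) x (0 : g) = 0 := by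
  have := wedge_smul_right (0 : k) x (0 : g)
  simpa using this


end AuxLemmas

set_option maxHeartbeats 2000000 in
/-- If `(g, d)` is a differential 3-Lie algebra of weight `lam`, then
`L = g ∧ g` with the Leibniz bracket `[·,·]_F` and
`d_L(x∧y) = d x ∧ y + x ∧ d y + lam • (d x ∧ d y)` is a differential Leibniz algebra of
weight `lam`. -/
theorem stmt1 {k : Type*} [Field k] [CharZero k] {g : Type*} [AddCommGroup g] [Module k g]
    (b : g →ₗ[k] g →ₗ[k] g →ₗ[k] g) (lam : k) (d : g →ₗ[k] g)
    (hb : IsThreeLie b) (hd : IsWeightedDiff b lam d) :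
    ∃ F : (⋀[k]^2 g) →ₗ[k] (⋀[k]^2 g) →ₗ[k] (⋀[k]^2 g), ∃ dL : (⋀[k]^2 g) →ₗ[k] (⋀[k]^2 g),
      (∀ x₁ x₂ y₁ y₂ : g, F (wedge x₁ x₂) (wedge y₁ y₂) =
        wedge (b x₁ x₂ y₁) y₂ + wedge y₁ (b x₁ x₂ y₂)) ∧
      (∀ X Y Z : ⋀[k]^2 g, F X (F Y Z) = F (F X Y) Z + F Y (F X Z)) ∧
      (∀ x y : g, dL (wedge x y) =
        wedge (d x) y + wedge x (d y) + lam • wedge (d x) (d y)) ∧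
      (∀ X Y : ⋀[k]^2 g, dL (F X Y) =
        F (dL X) Y + F X (dL Y) + lam • F (dL X) (dL Y)) := by
  unfold IsWeightedDiff at hd
  obtain ⟨hb1, hb2, hb3⟩ := hb
  have bxx : ∀ x : g, b x x = 0 := by
    intro x; ext z
    have h := hb1 x x z
    have h2 : b x x z + b x x z = 0 := by nth_rewrite 2 [h]; simp
    have h3 : (2 : k) • b x x z = 0 := by rw [two_smul]; exact h2
    have h4 := (smul_eq_zero.mp h3).resolve_left two_ne_zero
    simpa using h4
  set F : (⋀[k]^2 g) →ₗ[k] (⋀[k]^2 g) →ₗ[k] (⋀[k]^2 g) :=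
    liftWedge (twoAlt (LinearMap.mk₂ k (fun x₁ x₂ => derW (b x₁ x₂))
      (fun x x' y => by
        show derW (b (x + x') y) = derW (b x y) + derW (b x' y)
        rw [map_add, LinearMap.add_apply, derW_add])
      (fun c x y => by
        show derW (b (c • x) y) = c • derW (b x y)
        rw [map_smul, LinearMap.smul_apply, derW_smul])
      (fun x y y' => by
        show derW (b x (y + y')) = derW (b x y) + derW (b x y')
        rw [map_add, derW_add])
      (fun c x y => by
        show derW (b x (c • y)) = c • derW (b x y)
        rw [map_smul, derW_smul]))
      (fun x => by
        show derW (b x x) = 0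
        rw [bxx x]; exact derW_zero)) with hF
  set dL : (⋀[k]^2 g) →ₗ[k] (⋀[k]^2 g) := derW d + lam • sqW d with hdL
  have Fw : ∀ x₁ x₂ : g, F (wedge x₁ x₂) = derW (b x₁ x₂) := by
    intro x₁ x₂; simp [hF]
  have Fww : ∀ x₁ x₂ y₁ y₂ : g, F (wedge x₁ x₂) (wedge y₁ y₂) =
      wedge (b x₁ x₂ y₁) y₂ + wedge y₁ (b x₁ x₂ y₂) := by
    intro x₁ x₂ y₁ y₂; rw [Fw, derW_wedge]
  have dLw : ∀ x y : g, dL (wedge x y) =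
      wedge (d x) y + wedge x (d y) + lam • wedge (d x) (d y) := by
    intro x y
    simp [hdL, LinearMap.add_apply, LinearMap.smul_apply]
  clear hF hdL
  clear_value F dL
  refine ⟨F, dL, Fww, ?_, dLw, ?_⟩
  · -- Leibniz identity
    intro X
    induction X using wedge_induction with
    | hzero => intro Y Z; simp
    | hadd a a' pa pa' =>
      intro Y Z
      simp only [map_add, LinearMap.add_apply, pa, pa']
      abel
    | hsmul c a pa =>
      intro Y Z
      simp only [map_smul, LinearMap.smul_apply, pa, smul_add]
    | hw x₁ x₂ =>
      intro Y
      induction Y using wedge_induction with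
      | hzero => intro Z; simp
      | hadd a a' pa pa' =>
        intro Z
        simp only [map_add, LinearMap.add_apply, pa, pa']
        abel
      | hsmul c a pa =>
        intro Z
        simp only [map_smul, LinearMap.smul_apply, pa, smul_add]
      | hw y₁ y₂ =>
        intro Z
        induction Z using wedge_induction with
        | hzero => simp
        | hadd a a' pa pa' =>
          simp only [map_add, pa, pa']
          abel
        | hsmul c a pa =>
          simp only [map_smul, pa, smul_add]
        | hw z₁ z₂ =>
          rw [Fww y₁ y₂ z₁ z₂, map_add, Fww, Fww, Fww x₁ x₂ y₁ y₂, map_add,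
            LinearMap.add_apply, Fww, Fww, Fww x₁ x₂ z₁ z₂, map_add, Fww, Fww,
            hb3 x₁ x₂ y₁ y₂ z₁, hb3 x₁ x₂ y₁ y₂ z₂]
          simp only [wedge_add_left, wedge_add_right]
          abel
  · -- differential identity
    intro X
    induction X using wedge_induction with
    | hzero => intro Y; simp
    | hadd a a' pa pa' =>
      intro Y
      simp only [map_add, LinearMap.add_apply, pa, pa', smul_add]
      try abel
    | hsmul c a pa =>
      intro Y
      simp only [map_smul, LinearMap.smul_apply, pa, smul_add, smul_smul]
      module
    | hw x₁ x₂ =>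
      intro Y
      induction Y using wedge_induction with
      | hzero => simp
      | hadd a a' pa pa' =>
        simp only [map_add, LinearMap.add_apply, pa, pa', smul_add]
        try abel
      | hsmul c a pa =>
        simp only [map_smul, LinearMap.smul_apply, pa, smul_add, smul_smul]
        module
      | hw y₁ y₂ =>
        rw [Fww x₁ x₂ y₁ y₂, map_add, dLw, dLw, dLw x₁ x₂, dLw y₁ y₂]
        simp only [map_add, map_smul, LinearMap.add_apply, LinearMap.smul_apply]
        simp only [Fww]
        simp only [hd]
        simp only [wedge_add_left, wedge_add_right, wedge_smul_left, wedge_smul_right,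
          smul_add, smul_smul]
        module
end

section
/- Let (V,ρ,d_V) be a representation of a differential 3-Lie algebra (g,d_g) of weight λ. Define ρ̂(x₁,x₂) = ρ(x₁,x₂) + λ(ρ(d_g x₁, x₂) + ρ(x₁, d_g x₂) + λρ(d_g x₁, d_g x₂)). Then ρ̂ satisfies the weighted compatibility condition d_V ρ̂(x₁,x₂) = ρ̂(d_g x₁,x₂) + ρ̂(x₁,d_g x₂) + λρ̂(d_g x₁,d_g x₂) + ρ̂(x₁,x₂)d_V + λ(ρ̂(d_g x₁,x₂) + ρ̂(x₁,d_g x₂) + λρ̂(d_g x₁,d_g x₂))d_V. -/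
/-- A representation of a 3-Lie algebra `(g,b)` on `V`. -/
def IsRep {k g V : Type*} [Field k] [AddCommGroup g] [Module k g]
    [AddCommGroup V] [Module k V]
    (b : g →ₗ[k] g →ₗ[k] g →ₗ[k] g) (ρ : g →ₗ[k] g →ₗ[k] Module.End k V) : Prop :=
  (∀ x y, ρ x y = - ρ y x) ∧
  (∀ x₁ x₂ x₃ x₄, ρ x₁ x₂ * ρ x₃ x₄ =
     ρ (b x₁ x₂ x₃) x₄ + ρ x₃ (b x₁ x₂ x₄) + ρ x₃ x₄ * ρ x₁ x₂) ∧
  (∀ x₁ x₂ x₃ x₄, ρ x₁ (b x₂ x₃ x₄) =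
     ρ x₃ x₄ * ρ x₁ x₂ - ρ x₂ x₄ * ρ x₁ x₃ + ρ x₂ x₃ * ρ x₁ x₄)

/-- Weighted compatibility of `dV` with the representation `ρ` (equation (2.5)). -/
def IsDiffRep {k g V : Type*} [Field k] [AddCommGroup g] [Module k g]
    [AddCommGroup V] [Module k V] (lam : k)
    (d : g →ₗ[k] g) (ρ : g →ₗ[k] g →ₗ[k] Module.End k V) (dV : Module.End k V) : Prop :=
  ∀ x y, dV * ρ x y =
    ρ (d x) y + ρ x (d y) + lam • ρ (d x) (d y) + ρ x y * dV
    + lam • ((ρ (d x) y + ρ x (d y) + lam • ρ (d x) (d y)) * dV)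

/-- if `(V,ρ,dV)` is a representation of the differential 3-Lie algebra
`(g,d)` of weight `lam`, then
`ρ̂(x₁,x₂) = ρ(x₁,x₂) + lam(ρ(dx₁,x₂) + ρ(x₁,dx₂) + lam ρ(dx₁,dx₂))` satisfies the
weighted compatibility condition with `dV`. -/
theorem stmt4 {k : Type*} [Field k] [CharZero k] {g V : Type*} [AddCommGroup g] [Module k g]
    [AddCommGroup V] [Module k V]
    (b : g →ₗ[k] g →ₗ[k] g →ₗ[k] g) (lam : k) (d : g →ₗ[k] g)
    (ρ : g →ₗ[k] g →ₗ[k] Module.End k V) (dV : Module.End k V)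
    (hb : IsThreeLie b) (hd : IsWeightedDiff b lam d)
    (hρ : IsRep b ρ) (hdV : IsDiffRep lam d ρ dV)
    (ρhat : g → g → Module.End k V)
    (hρhat : ∀ x y, ρhat x y =
      ρ x y + lam • (ρ (d x) y + ρ x (d y) + lam • ρ (d x) (d y))) :
    ∀ x y, dV * ρhat x y =
      ρhat (d x) y + ρhat x (d y) + lam • ρhat (d x) (d y) + ρhat x y * dV
      + lam • ((ρhat (d x) y + ρhat x (d y) + lam • ρhat (d x) (d y)) * dV) := by
  intro x y
  simp only [hρhat, mul_add, mul_smul_comm, add_mul, smul_mul_assoc, smul_add]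
  rw [hdV x y, hdV (d x) y, hdV x (d y), hdV (d x) (d y)]
  simp only [mul_add, mul_smul_comm, add_mul, smul_mul_assoc, smul_add, smul_smul]
  module
end

section
/- Let (V,ρ,d_V) be a representation of a differential 3-Lie algebra (g,d_g) of weight λ. Then ρ̂(x₁,x₂) := ρ(x₁,x₂) + λ(ρ(d_g x₁,x₂) + ρ(x₁,d_g x₂) + λρ(d_g x₁,d_g x₂)) defines a representation of the 3-Lie algebra g on V, i.e. ρ̂ satisfies ρ̂(x₁,x₂)ρ̂(x₃,x₄) = ρ̂([x₁,x₂,x₃],x₄) + ρ̂(x₃,[x₁,x₂,x₄]) + ρ̂(x₃,x₄)ρ̂(x₁,x₂) and ρ̂(x₁,[x₂,x₃,x₄]) = ρ̂(x₃,x₄)ρ̂(x₁,x₂) − ρ̂(x₂,x₄)ρ̂(x₁,x₃) + ρ̂(x₂,x₃)ρ̂(x₁,x₄). -/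
/-- with the notation of Statement 4, `ρ̂` is again a representation of the
3-Lie algebra `g` on `V`. -/
theorem stmt5 {k : Type*} [Field k] [CharZero k] {g V : Type*} [AddCommGroup g] [Module k g]
    [AddCommGroup V] [Module k V]
    (b : g →ₗ[k] g →ₗ[k] g →ₗ[k] g) (lam : k) (d : g →ₗ[k] g)
    (ρ : g →ₗ[k] g →ₗ[k] Module.End k V) (dV : Module.End k V)
    (hb : IsThreeLie b) (hd : IsWeightedDiff b lam d)
    (hρ : IsRep b ρ) (hdV : IsDiffRep lam d ρ dV)
    (ρhat : g → g → Module.End k V)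
    (hρhat : ∀ x y, ρhat x y =
      ρ x y + lam • (ρ (d x) y + ρ x (d y) + lam • ρ (d x) (d y))) :
    (∀ x₁ x₂ x₃ x₄, ρhat x₁ x₂ * ρhat x₃ x₄ =
       ρhat (b x₁ x₂ x₃) x₄ + ρhat x₃ (b x₁ x₂ x₄) + ρhat x₃ x₄ * ρhat x₁ x₂) ∧
    (∀ x₁ x₂ x₃ x₄, ρhat x₁ (b x₂ x₃ x₄) =
       ρhat x₃ x₄ * ρhat x₁ x₂ - ρhat x₂ x₄ * ρhat x₁ x₃ + ρhat x₂ x₃ * ρhat x₁ x₄) := by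
  set T : g → g := fun x => x + lam • d x with hTdef
  have hkey : ∀ x y z, b (T x) (T y) (T z) = T (b x y z) := by
    intro x y z
    simp only [hTdef, map_add, map_smul, LinearMap.add_apply, LinearMap.smul_apply, hd x y z]
    module
  have hR : ∀ x y, ρhat x y = ρ (T x) (T y) := by
    intro x y
    simp only [hρhat, hTdef, map_add, map_smul, LinearMap.add_apply, LinearMap.smul_apply]
    module
  constructor
  · intro x₁ x₂ x₃ x₄
    simp only [hR, ← hkey x₁ x₂ x₃, ← hkey x₁ x₂ x₄]
    exact hρ.2.1 _ _ _ _
  · intro x₁ x₂ x₃ x₄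
    simp only [hR, ← hkey x₂ x₃ x₄]
    exact hρ.2.2 _ _ _ _
end

section
/- Let (V,ρ,d_V) be a representation of a differential 3-Lie algebra (g,d_g) of weight 0, and let L = g∧g be the associated Leibniz algebra with bracket [x₁∧x₂,y₁∧y₂]_F = [x₁,x₂,y₁]∧y₂ + y₁∧[x₁,x₂,y₂] and d_L(x∧y) = d_g x∧y + x∧d_g y. Define ρᴸ(x∧y)(f)(z) = ρ(x,y)f(z) − f([x,y,z]), ρᴿ(x∧y)(f)(z) = f([x,y,z]) − ρ(x,y)f(z) − ρ(y,z)f(x) − ρ(z,x)f(y), and ψ(f) = d_V∘f − f∘d_g on Hom(g,V). Then ψ∘ρᴸ(X) = ρᴸ(d_L X) + ρᴸ(X)∘ψ and ψ∘ρᴿ(X) = ρᴿ(d_L X) + ρᴿ(X)∘ψ for all X ∈ L. -/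
/-- The left action `ρᴸ(x∧y)(f)(z) = ρ(x,y)f(z) − f([x,y,z])` on `Hom(g,V)`. -/
def actL {k g V : Type*} [Field k] [AddCommGroup g] [Module k g] [AddCommGroup V] [Module k V]
    (b : g →ₗ[k] g →ₗ[k] g →ₗ[k] g) (ρ : g →ₗ[k] g →ₗ[k] Module.End k V)
    (x y : g) (f : g → V) : g → V :=
  fun z => ρ x y (f z) - f (b x y z)

/-- The right action
`ρᴿ(x∧y)(f)(z) = f([x,y,z]) − ρ(x,y)f(z) − ρ(y,z)f(x) − ρ(z,x)f(y)` on `Hom(g,V)`. -/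
def actR {k g V : Type*} [Field k] [AddCommGroup g] [Module k g] [AddCommGroup V] [Module k V]
    (b : g →ₗ[k] g →ₗ[k] g →ₗ[k] g) (ρ : g →ₗ[k] g →ₗ[k] Module.End k V)
    (x y : g) (f : g → V) : g → V :=
  fun z => f (b x y z) - ρ x y (f z) - ρ y z (f x) - ρ z x (f y)

/-- `ψ(f) = d_V ∘ f − f ∘ d_g` on `Hom(g,V)`. -/
def psiMap {k g V : Type*} [Field k] [AddCommGroup g] [Module k g] [AddCommGroup V] [Module k V]
    (d : g →ₗ[k] g) (dV : Module.End k V) (f : g → V) : g → V :=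
  fun z => dV (f z) - f (d z)

/-- for a representation `(V,ρ,dV)` of a differential 3-Lie algebra of
weight 0, with `d_L(x∧y) = dx∧y + x∧dy`, one has
`ψ∘ρᴸ(X) = ρᴸ(d_L X) + ρᴸ(X)∘ψ` and `ψ∘ρᴿ(X) = ρᴿ(d_L X) + ρᴿ(X)∘ψ` on `Hom(g,V)`. -/
theorem stmt6 {k : Type*} [Field k] [CharZero k] {g V : Type*} [AddCommGroup g] [Module k g]
    [AddCommGroup V] [Module k V]
    (b : g →ₗ[k] g →ₗ[k] g →ₗ[k] g) (d : g →ₗ[k] g)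
    (ρ : g →ₗ[k] g →ₗ[k] Module.End k V) (dV : Module.End k V)
    (hb : IsThreeLie b) (hd : IsWeightedDiff b (0 : k) d)
    (hρ : IsRep b ρ) (hdV : IsDiffRep (0 : k) d ρ dV) :
    ∀ (x y : g) (f : g →ₗ[k] V),
      (psiMap d dV (actL b ρ x y ⇑f) =
        actL b ρ (d x) y ⇑f + actL b ρ x (d y) ⇑f + actL b ρ x y (psiMap d dV ⇑f)) ∧
      (psiMap d dV (actR b ρ x y ⇑f) =
        actR b ρ (d x) y ⇑f + actR b ρ x (d y) ⇑f + actR b ρ x y (psiMap d dV ⇑f)) := by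
  intro x y f
  have hd0 : ∀ x y z, d (b x y z) = b (d x) y z + b x (d y) z + b x y (d z) := by
    intro x y z; simpa using hd x y z
  have hdV0 : ∀ x y (v : V), dV (ρ x y v) = ρ (d x) y v + ρ x (d y) v + ρ x y (dV v) := by
    intro x y v
    have h := hdV x y
    simp only [zero_smul, smul_zero, add_zero, zero_add] at h
    have h2 := congrArg (fun e : Module.End k V => e v) h
    simpa [Module.End.mul_apply] using h2
  constructor <;> funext z <;>
    simp only [actL, actR, psiMap, Pi.add_apply, map_sub, hdV0, hd0, map_add] <;> abel
end

section
/- Let N be a Nijenhuis operator on a differential 3-Lie algebra (g,d_g) of weight λ. Then d_g is a λ-weighted differential operator for the deformed bracket: d_g([x,y,z]_N) = [d_g x,y,z]_N + [x,d_g y,z]_N + [x,y,d_g z]_N + λ([d_g x,d_g y,z]_N + [x,d_g y,d_g z]_N + [d_g x,y,d_g z]_N) + λ²[d_g x,d_g y,d_g z]_N, where [x,y,z]_N = [Nx,Ny,z] + [x,Ny,Nz] + [Nx,y,Nz] − N([Nx,y,z] + [x,Ny,z] + [x,y,Nz]) + N²[x,y,z]. -/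
set_option maxHeartbeats 2000000


/-- if `N` is a Nijenhuis operator on a differential 3-Lie algebra
`(g,b,d)` of weight `lam`, then `d` satisfies the `lam`-weighted derivation rule for the
deformed bracket `[·,·,·]_N`. -/
theorem stmt8 {k : Type*} [Field k] [CharZero k] {g : Type*} [AddCommGroup g] [Module k g]
    (b : g →ₗ[k] g →ₗ[k] g →ₗ[k] g) (lam : k) (d : g →ₗ[k] g) (N : g →ₗ[k] g)
    (hb : IsThreeLie b) (hd : IsWeightedDiff b lam d)
    (hNd : ∀ x, N (d x) = d (N x))
    (hN : ∀ x y z, b (N x) (N y) (N z) =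
      N (b (N x) (N y) z + b x (N y) (N z) + b (N x) y (N z))
      - N (N (b (N x) y z + b x (N y) z + b x y (N z)))
      + N (N (N (b x y z))))
    (bN : g → g → g → g)
    (hbN : ∀ x y z, bN x y z =
      b (N x) (N y) z + b x (N y) (N z) + b (N x) y (N z)
      - N (b (N x) y z + b x (N y) z + b x y (N z))
      + N (N (b x y z))) :
    ∀ x y z, d (bN x y z) =
      bN (d x) y z + bN x (d y) z + bN x y (d z)
      + lam • (bN (d x) (d y) z + bN x (d y) (d z) + bN (d x) y (d z))
      + lam ^ 2 • bN (d x) (d y) (d z) := by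
  unfold IsWeightedDiff at hd
  intro x y z
  rw [hbN, hbN, hbN, hbN, hbN, hbN, hbN, hbN]
  simp only [map_add, map_sub, hd, ← hNd, map_smul]
  module
end

section
/- Let K: V → g be an O-operator on a differential 3-Lie algebra (g,d_g) of weight λ associated to the representation (V,ρ,d_V). Then (V, [·,·,·]_K, d_V) is a differential 3-Lie algebra of weight λ, where [u,v,w]_K = ρ(Ku,Kv)w + ρ(Kv,Kw)u + ρ(Kw,Ku)v. -/
set_option maxHeartbeats 2000000


/-- if `K : V → g` is an O-operator on the differential 3-Lie algebra
`(g,b,d)` of weight `lam` associated to the representation `(V,ρ,dV)`, then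
`(V, [·,·,·]_K, dV)` is a differential 3-Lie algebra of weight `lam`, where
`[u,v,w]_K = ρ(Ku,Kv)w + ρ(Kv,Kw)u + ρ(Kw,Ku)v`. -/
theorem stmt9 {k : Type*} [Field k] [CharZero k] {g V : Type*} [AddCommGroup g] [Module k g]
    [AddCommGroup V] [Module k V]
    (b : g →ₗ[k] g →ₗ[k] g →ₗ[k] g) (lam : k) (d : g →ₗ[k] g)
    (ρ : g →ₗ[k] g →ₗ[k] Module.End k V) (dV : Module.End k V)
    (hb : IsThreeLie b) (hd : IsWeightedDiff b lam d)
    (hρ : IsRep b ρ) (hdV : IsDiffRep lam d ρ dV)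
    (K : V →ₗ[k] g)
    (hK : ∀ u v w, b (K u) (K v) (K w) =
      K (ρ (K u) (K v) w + ρ (K v) (K w) u + ρ (K w) (K u) v))
    (hKd : ∀ v, K (dV v) = d (K v)) :
    ∃ B : V →ₗ[k] V →ₗ[k] V →ₗ[k] V,
      (∀ u v w, B u v w = ρ (K u) (K v) w + ρ (K v) (K w) u + ρ (K w) (K u) v) ∧
      IsThreeLie B ∧ IsWeightedDiff B lam (dV : V →ₗ[k] V) := by
  obtain ⟨hskew, hBop, hCop⟩ := hρ
  -- pointwise versions of the representation axioms
  have hA' : ∀ (x y : g) (m : V), ρ x y m = -ρ y x m := by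
    intro x y m; rw [hskew x y]; simp
  have hB' : ∀ (x₁ x₂ x₃ x₄ : g) (m : V), ρ x₁ x₂ (ρ x₃ x₄ m) =
      ρ (b x₁ x₂ x₃) x₄ m + ρ x₃ (b x₁ x₂ x₄) m + ρ x₃ x₄ (ρ x₁ x₂ m) := by
    intro x₁ x₂ x₃ x₄ m
    simpa [Module.End.mul_apply] using LinearMap.congr_fun (hBop x₁ x₂ x₃ x₄) m
  have hC' : ∀ (x₁ x₂ x₃ x₄ : g) (m : V), ρ x₁ (b x₂ x₃ x₄) m =
      ρ x₃ x₄ (ρ x₁ x₂ m) - ρ x₂ x₄ (ρ x₁ x₃ m) + ρ x₂ x₃ (ρ x₁ x₄ m) := by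
    intro x₁ x₂ x₃ x₄ m
    simpa [Module.End.mul_apply] using LinearMap.congr_fun (hCop x₁ x₂ x₃ x₄) m
  have hLA : ∀ (x y z w : g) (m : V), ρ x y (ρ z w m) = -ρ x y (ρ w z m) := by
    intro x y z w m; rw [hA' z w, map_neg]
  have hdV' : ∀ (x y : g) (m : V), dV (ρ x y m) =
      ρ (d x) y m + ρ x (d y) m + lam • ρ (d x) (d y) m + ρ x y (dV m)
      + lam • (ρ (d x) y (dV m) + ρ x (d y) (dV m) + lam • ρ (d x) (d y) (dV m)) := by
    intro x y m
    simpa [Module.End.mul_apply, LinearMap.smul_apply] using LinearMap.congr_fun (hdV x y) m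
  -- the trilinear map B
  let T : V →ₗ[k] V →ₗ[k] V →ₗ[k] V := (ρ.comp K).compl₂ K
  let cyc : (V →ₗ[k] V →ₗ[k] V →ₗ[k] V) → (V →ₗ[k] V →ₗ[k] V →ₗ[k] V) :=
    fun A => (LinearMap.lflip.comp A).flip
  refine ⟨T + cyc T + cyc (cyc T), ?_, ⟨?_, ?_, ?_⟩, ?_⟩
  · intro u v w
    simp [T, cyc, LinearMap.flip_apply, LinearMap.lflip_apply]
  · -- skew 1
    intro u v w
    have hBdef : ∀ u v w : V, (T + cyc T + cyc (cyc T)) u v w =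
        ρ (K u) (K v) w + ρ (K v) (K w) u + ρ (K w) (K u) v := by
      intro u v w
      simp [T, cyc, LinearMap.flip_apply, LinearMap.lflip_apply]
    rw [hBdef, hBdef]
    linear_combination (norm := module) hA' (K u) (K v) w + hA' (K v) (K w) u
      + hA' (K w) (K u) v
  · -- skew 2
    intro u v w
    have hBdef : ∀ u v w : V, (T + cyc T + cyc (cyc T)) u v w =
        ρ (K u) (K v) w + ρ (K v) (K w) u + ρ (K w) (K u) v := by
      intro u v w
      simp [T, cyc, LinearMap.flip_apply, LinearMap.lflip_apply]
    rw [hBdef, hBdef]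
    linear_combination (norm := module) hA' (K u) (K v) w + hA' (K v) (K w) u
      + hA' (K w) (K u) v
  · -- fundamental identity
    intro u v p q r
    have hBdef : ∀ u v w : V, (T + cyc T + cyc (cyc T)) u v w =
        ρ (K u) (K v) w + ρ (K v) (K w) u + ρ (K w) (K u) v := by
      intro u v w
      simp [T, cyc, LinearMap.flip_apply, LinearMap.lflip_apply]
    simp only [hBdef]
    simp only [← hK]
    simp only [map_add]
    linear_combination (norm := module)
      (-1 : k) • hA' (K r) (K p) (ρ (K q) (K u) v)
      + (-1 : k) • hA' (K r) (K p) (ρ (K u) (K v) q)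
      + (-1 : k) • hA' (K r) (K p) (ρ (K v) (K q) u)
      + hA' (b (K p) (K q) (K r)) (K u) v
      + (-1 : k) • hA' (b (K u) (K v) (K p)) (K r) q
      + (-1 : k) • hA' (b (K u) (K v) (K r)) (K p) q
      + hB' (K u) (K v) (K p) (K q) r
      + (-1 : k) • hB' (K u) (K v) (K p) (K r) q
      + hB' (K u) (K v) (K q) (K r) p
      + (-1 : k) • hC' (K u) (K p) (K q) (K r) v
      + hC' (K v) (K p) (K q) (K r) u
      + (-1 : k) • hLA (K p) (K q) (K r) (K u) v
      + hLA (K p) (K r) (K q) (K u) v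
      + (-1 : k) • hLA (K q) (K r) (K p) (K u) v
      + hLA (K u) (K v) (K r) (K p) q
  · -- weighted differential
    intro u v w
    have hBdef : ∀ u v w : V, (T + cyc T + cyc (cyc T)) u v w =
        ρ (K u) (K v) w + ρ (K v) (K w) u + ρ (K w) (K u) v := by
      intro u v w
      simp [T, cyc, LinearMap.flip_apply, LinearMap.lflip_apply]
    simp only [hBdef, map_add, hdV', hKd]
    module
end

section
/- Let K: V → g be an O-operator on a differential 3-Lie algebra (g,d_g) of weight λ associated to the representation (V,ρ,d_V), and define ϱ_K(u,v)x = [Ku,Kv,x] − K(ρ(Kv,x)u + ρ(x,Ku)v). Then ϱ_K satisfies the weighted representation compatibility with d_g, i.e. d_g ϱ_K(u,v) = ϱ_K(d_V u,v) + ϱ_K(u,d_V v) + λϱ_K(d_V u,d_V v) + ϱ_K(u,v)d_g + λ(ϱ_K(d_V u,v) + ϱ_K(u,d_V v) + λϱ_K(d_V u,d_V v))d_g, so that (g,ϱ_K,d_g) is a representation of the differential 3-Lie algebra (V,[·,·,·]_K,d_V). -/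
set_option maxHeartbeats 2000000


/-- for an O-operator `K`, the map
`ϱ_K(u,v)x = [Ku,Kv,x] − K(ρ(Kv,x)u + ρ(x,Ku)v)` makes `(g, ϱ_K, d)` a representation of
the differential 3-Lie algebra `(V, [·,·,·]_K, dV)`; in particular the weighted
compatibility identity holds. -/
theorem stmt11 {k : Type*} [Field k] [CharZero k] {g V : Type*} [AddCommGroup g] [Module k g]
    [AddCommGroup V] [Module k V]
    (b : g →ₗ[k] g →ₗ[k] g →ₗ[k] g) (lam : k) (d : g →ₗ[k] g)
    (ρ : g →ₗ[k] g →ₗ[k] Module.End k V) (dV : Module.End k V)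
    (hb : IsThreeLie b) (hd : IsWeightedDiff b lam d)
    (hρ : IsRep b ρ) (hdV : IsDiffRep lam d ρ dV)
    (K : V →ₗ[k] g)
    (hK : ∀ u v w, b (K u) (K v) (K w) =
      K (ρ (K u) (K v) w + ρ (K v) (K w) u + ρ (K w) (K u) v))
    (hKd : ∀ v, K (dV v) = d (K v))
    (BK : V → V → V → V)
    (hBK : ∀ u v w, BK u v w = ρ (K u) (K v) w + ρ (K v) (K w) u + ρ (K w) (K u) v)
    (P : V → V → g → g)
    (hP : ∀ u v x, P u v x = b (K u) (K v) x - K (ρ (K v) x u + ρ x (K u) v)) :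
    (∀ u₁ u₂ u₃ u₄ x, P u₁ u₂ (P u₃ u₄ x) =
       P (BK u₁ u₂ u₃) u₄ x + P u₃ (BK u₁ u₂ u₄) x + P u₃ u₄ (P u₁ u₂ x)) ∧
    (∀ u₁ u₂ u₃ u₄ x, P u₁ (BK u₂ u₃ u₄) x =
       P u₃ u₄ (P u₁ u₂ x) - P u₂ u₄ (P u₁ u₃ x) + P u₂ u₃ (P u₁ u₄ x)) ∧
    (∀ u v x, d (P u v x) =
       P (dV u) v x + P u (dV v) x + lam • P (dV u) (dV v) x + P u v (d x)
       + lam • (P (dV u) v (d x) + P u (dV v) (d x) + lam • P (dV u) (dV v) (d x))) := by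
  have R2e : ∀ x₁ x₂ x₃ x₄ (w : V), ρ x₁ x₂ (ρ x₃ x₄ w) =
      ρ (b x₁ x₂ x₃) x₄ w + ρ x₃ (b x₁ x₂ x₄) w + ρ x₃ x₄ (ρ x₁ x₂ w) := by
    intro x₁ x₂ x₃ x₄ w
    have := congrArg (fun (f : Module.End k V) => f w) (hρ.2.1 x₁ x₂ x₃ x₄)
    simpa [Module.End.mul_apply] using this
  have R3e : ∀ x₁ x₂ x₃ x₄ (w : V), ρ x₁ (b x₂ x₃ x₄) w =
      ρ x₃ x₄ (ρ x₁ x₂ w) - ρ x₂ x₄ (ρ x₁ x₃ w) + ρ x₂ x₃ (ρ x₁ x₄ w) := by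
    intro x₁ x₂ x₃ x₄ w
    have := congrArg (fun (f : Module.End k V) => f w) (hρ.2.2 x₁ x₂ x₃ x₄)
    simpa [Module.End.mul_apply] using this
  have hske : ∀ x y (w : V), ρ x y w = - ρ y x w := by
    intro x y w
    rw [hρ.1 x y]; simp
  have cyc : ∀ p q r, b p q r = b q r p := by
    intro p q r
    rw [hb.1 p q r, hb.2.1 q p r, neg_neg]
  have Lg : ∀ a₁ a₂ a₃ a₄ x, b a₁ (b a₂ a₃ a₄) x =
      b a₃ a₄ (b a₁ a₂ x) - b a₂ a₄ (b a₁ a₃ x) + b a₂ a₃ (b a₁ a₄ x) := by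
    intro a₁ a₂ a₃ a₄ x
    rw [hb.2.1 a₁ (b a₂ a₃ a₄) x, hb.2.2 a₁ x a₂ a₃ a₄,
        cyc (b a₁ x a₂) a₃ a₄, hb.2.1 a₁ a₂ x,
        hb.2.1 a₂ (b a₁ x a₃) a₄, hb.2.1 a₁ a₃ x, hb.2.1 a₁ a₄ x]
    simp only [map_neg, LinearMap.neg_apply, neg_neg, neg_add]
    abel
  have dVe : ∀ x y (w : V), dV (ρ x y w) = ρ (d x) y w + ρ x (d y) w
      + lam • ρ (d x) (d y) w + ρ x y (dV w)
      + lam • (ρ (d x) y (dV w) + ρ x (d y) (dV w) + lam • ρ (d x) (d y) (dV w)) := by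
    intro x y w
    have := congrArg (fun (f : Module.End k V) => f w) (hdV x y)
    simpa [Module.End.mul_apply, LinearMap.add_apply, LinearMap.smul_apply] using this
  refine ⟨?_, ?_, ?_⟩
  · intro u₁ u₂ u₃ u₄ x
    simp only [hP, hBK, map_add, map_sub, LinearMap.add_apply, LinearMap.sub_apply]
    rw [hb.2.2 (K u₁) (K u₂) (K u₃) (K u₄) x,
        hske ((b (K u₃)) (K u₄) x) (K u₁) u₂,
        R3e (K u₂) (K u₃) (K u₄) x u₁,
        R3e (K u₁) (K u₃) (K u₄) x u₂]
    simp only [hK, map_add, map_neg, map_sub, LinearMap.add_apply, LinearMap.sub_apply,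
      LinearMap.neg_apply, neg_neg, neg_add, neg_sub]
    rw [R2e (K u₁) (K u₂) (K u₄) x u₃, R2e (K u₁) (K u₂) x (K u₃) u₄]
    simp only [hK, map_add, LinearMap.add_apply]
    rw [hske (K u₃) (K u₁) u₂, hske (K u₄) (K u₁) u₂, hske x (K u₁) u₂]
    simp only [map_neg, LinearMap.neg_apply, neg_neg]
    rw [hske x (K u₃) (ρ (K u₂) (K u₄) u₁), hske x (K u₃) (ρ (K u₁) (K u₄) u₂)]
    simp only [map_neg, LinearMap.neg_apply, neg_neg]
    abel
  · intro u₁ u₂ u₃ u₄ x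
    simp only [hP, hBK]
    rw [← hK u₂ u₃ u₄]
    simp only [map_add, map_sub, LinearMap.add_apply, LinearMap.sub_apply]
    rw [Lg (K u₁) (K u₂) (K u₃) (K u₄) x,
        hske ((b (K u₂)) (K u₃) (K u₄)) x u₁,
        R3e x (K u₂) (K u₃) (K u₄) u₁,
        R2e x (K u₁) (K u₂) (K u₃) u₄,
        R2e x (K u₁) (K u₃) (K u₄) u₂,
        R2e x (K u₁) (K u₄) (K u₂) u₃,
        cyc x (K u₁) (K u₂), cyc x (K u₁) (K u₃), cyc x (K u₁) (K u₄)]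
    simp only [hK, map_add, map_neg, map_sub, LinearMap.add_apply, LinearMap.sub_apply,
      LinearMap.neg_apply, neg_neg, neg_add, neg_sub]
    rw [hske (K u₂) x u₁, hske (K u₃) x u₁, hske (K u₄) x u₁]
    simp only [map_neg, LinearMap.neg_apply, neg_neg]
    rw [hske ((b (K u₁)) (K u₃) x) (K u₂) u₄,
        hske ((b (K u₁)) (K u₃) x) (K u₄) u₂,
        hske (K u₄) (K u₂) (ρ x (K u₁) u₃)]
    simp only [map_neg, LinearMap.neg_apply, neg_neg]
    abel
  · intro u v x
    simp only [hP, map_sub, map_add, smul_sub, smul_add]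
    rw [hd]
    simp only [← hKd, map_add, map_smul, dVe, map_sub, smul_add, smul_sub, smul_smul, pow_two]
    abel
end

section
/- Let (g₀,g₁,h,l₃,l₅) be a strict 3-Lie 2-algebra (l₅ = 0) with a strict differential structure (d₀,d₁,d₂ = 0) of weight λ. Then g₁ with the bracket [a,b,c]_{g₁} = l₃(h(a),h(b),c) and the map d₁ is a differential 3-Lie algebra of weight λ. -/
/-- for a strict differential 3-Lie 2-algebra
`(g₀,g₁,h,l₃,l₅=0,d₀,d₁,d₂=0)` of weight `lam` (here `l30` is `l₃` on `g₀` and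
`l31 x y a = l₃(x,y,a)` is the mixed component, written with the `g₁`-argument last),
the bracket `[a,b,c]_{g₁} = l₃(h a, h b, c)` together with `d₁` makes `g₁` a
differential 3-Lie algebra of weight `lam`. -/
theorem stmt14 {k : Type*} [Field k] [CharZero k] {g0 g1 : Type*}
    [AddCommGroup g0] [Module k g0] [AddCommGroup g1] [Module k g1] (lam : k)
    (l30 : g0 →ₗ[k] g0 →ₗ[k] g0 →ₗ[k] g0)
    (l31 : g0 →ₗ[k] g0 →ₗ[k] g1 →ₗ[k] g1)
    (h : g1 →ₗ[k] g0) (d0 : g0 →ₗ[k] g0) (d1 : g1 →ₗ[k] g1)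
    -- strict 3-Lie 2-algebra axioms (l₅ = 0):
    (hb0 : IsThreeLie l30)
    (hskew : ∀ x y a, l31 x y a = - l31 y x a)
    (h61a : ∀ x y a, h (l31 x y a) = l30 x y (h a))
    (h61b : ∀ a b c : g1, l31 (h a) (h b) c = - l31 (h a) (h c) b)
    (h61c : ∀ a b c : g1, l31 (h b) (h c) a = l31 (h a) (h b) c)
    (h63 : ∀ (a : g1) (x₂ x₃ x₄ x₅ : g0),
      l31 x₂ (l30 x₃ x₄ x₅) a =
        - l31 x₃ x₅ (l31 x₂ x₄ a) + l31 x₄ x₅ (l31 x₂ x₃ a) + l31 x₃ x₄ (l31 x₂ x₅ a))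
    (h64 : ∀ (x₁ x₂ x₄ x₅ : g0) (a : g1),
      l31 x₁ x₂ (l31 x₄ x₅ a) =
        l31 (l30 x₁ x₂ x₄) x₅ a + l31 x₄ (l30 x₁ x₂ x₅) a + l31 x₄ x₅ (l31 x₁ x₂ a))
    -- strict differential structure (d₂ = 0):
    (h66 : ∀ a, d0 (h a) = h (d1 a))
    (h67 : IsWeightedDiff l30 lam d0)
    (h68 : ∀ x₁ x₂ a, d1 (l31 x₁ x₂ a) =
      l31 (d0 x₁) x₂ a + l31 x₁ (d0 x₂) a + l31 x₁ x₂ (d1 a)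
      + lam • (l31 (d0 x₁) (d0 x₂) a + l31 x₁ (d0 x₂) (d1 a) + l31 (d0 x₁) x₂ (d1 a))
      + lam ^ 2 • l31 (d0 x₁) (d0 x₂) (d1 a)) :
    ∃ B : g1 →ₗ[k] g1 →ₗ[k] g1 →ₗ[k] g1,
      (∀ a b c, B a b c = l31 (h a) (h b) c) ∧
      IsThreeLie B ∧ IsWeightedDiff B lam d1 := by
  refine ⟨(l31.comp h).compl₂ h, fun a b c => rfl, ⟨?_, ?_, ?_⟩, ?_⟩
  · intro x y z
    simpa using hskew (h x) (h y) z
  · intro x y z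
    simpa using h61b x y z
  · intro x₁ x₂ y₁ y₂ y₃
    simp only [LinearMap.compl₂_apply, LinearMap.comp_apply, h61a]
    exact h64 (h x₁) (h x₂) (h y₁) (h y₂) y₃
  · intro x y z
    simp only [LinearMap.compl₂_apply, LinearMap.comp_apply, ← h66]
    exact h68 (h x) (h y) z
end

section
/- Let (g₁,d_{g₁}) and (g₂,d_{g₂}) be differential 3-Lie algebras of weight λ forming a matched pair of 3-Lie algebras via ρ: ∧²g₁ → gl(g₂) and ϱ: ∧²g₂ → gl(g₁), such that (g₂,ρ,d_{g₂}) is a representation of (g₁,d_{g₁}) and (g₁,ϱ,d_{g₁}) is a representation of (g₂,d_{g₂}). Then g₁⊕g₂ with the matched-pair bracket [x₁+a₁,x₂+a₂,x₃+a₃] = [x₁,x₂,x₃] + ϱ(a₁,a₂)x₃ + ϱ(a₃,a₁)x₂ + ϱ(a₂,a₃)x₁ + [a₁,a₂,a₃] + ρ(x₁,x₂)a₃ + ρ(x₃,x₁)a₂ + ρ(x₂,x₃)a₁ and the map (d_{g₁}+d_{g₂})(x+a) = d_{g₁}(x) + d_{g₂}(a) is a differential 3-Lie algebra of weight λ. 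-/
set_option maxHeartbeats 2000000 in
/-- a matched pair of differential 3-Lie algebras
`(g₁,g₂,d₁,d₂,ρ,ϱ)` of weight `lam` gives a differential 3-Lie algebra structure of
weight `lam` on `g₁ ⊕ g₂` with the matched-pair bracket and `(d₁+d₂)(x+a) = d₁x + d₂a`. -/
theorem stmt16 {k : Type*} [Field k] [CharZero k] {g1 g2 : Type*}
    [AddCommGroup g1] [Module k g1] [AddCommGroup g2] [Module k g2] (lam : k)
    (b1 : g1 →ₗ[k] g1 →ₗ[k] g1 →ₗ[k] g1) (b2 : g2 →ₗ[k] g2 →ₗ[k] g2 →ₗ[k] g2)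
    (d1 : g1 →ₗ[k] g1) (d2 : g2 →ₗ[k] g2)
    (ρ : g1 →ₗ[k] g1 →ₗ[k] Module.End k g2) (ϱ : g2 →ₗ[k] g2 →ₗ[k] Module.End k g1)
    (hb1 : IsThreeLie b1) (hd1 : IsWeightedDiff b1 lam d1)
    (hb2 : IsThreeLie b2) (hd2 : IsWeightedDiff b2 lam d2)
    (hρ : IsRep b1 ρ) (hρd : IsDiffRep lam d1 ρ (d2 : Module.End k g2))
    (hϱ : IsRep b2 ϱ) (hϱd : IsDiffRep lam d2 ϱ (d1 : Module.End k g1))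
    (B : g1 × g2 → g1 × g2 → g1 × g2 → g1 × g2)
    (hB : ∀ p q r, B p q r =
      (b1 p.1 q.1 r.1 + ϱ p.2 q.2 r.1 + ϱ r.2 p.2 q.1 + ϱ q.2 r.2 p.1,
       b2 p.2 q.2 r.2 + ρ p.1 q.1 r.2 + ρ r.1 p.1 q.2 + ρ q.1 r.1 p.2))
    (D : g1 × g2 → g1 × g2) (hD : ∀ p, D p = (d1 p.1, d2 p.2))
    -- matched pair: the bracket `B` is a 3-Lie bracket on `g₁ ⊕ g₂`
    (hskew1 : ∀ p q r, B p q r = - B q p r)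
    (hskew2 : ∀ p q r, B p q r = - B p r q)
    (hfund : ∀ p₁ p₂ q₁ q₂ q₃, B p₁ p₂ (B q₁ q₂ q₃) =
      B (B p₁ p₂ q₁) q₂ q₃ + B q₁ (B p₁ p₂ q₂) q₃ + B q₁ q₂ (B p₁ p₂ q₃)) :
    (∀ p q r, B p q r = - B q p r) ∧ (∀ p q r, B p q r = - B p r q) ∧
    (∀ p₁ p₂ q₁ q₂ q₃, B p₁ p₂ (B q₁ q₂ q₃) =
      B (B p₁ p₂ q₁) q₂ q₃ + B q₁ (B p₁ p₂ q₂) q₃ + B q₁ q₂ (B p₁ p₂ q₃)) ∧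
    (∀ p q r, D (B p q r) =
      B (D p) q r + B p (D q) r + B p q (D r)
      + lam • (B (D p) (D q) r + B p (D q) (D r) + B (D p) q (D r))
      + lam ^ 2 • B (D p) (D q) (D r)) := by
  refine ⟨hskew1, hskew2, hfund, ?_⟩
  rintro ⟨x1, a1⟩ ⟨x2, a2⟩ ⟨x3, a3⟩
  have H1 : ∀ a a' x, d1 (ϱ a a' x) =
      ϱ (d2 a) a' x + ϱ a (d2 a') x + lam • ϱ (d2 a) (d2 a') x + ϱ a a' (d1 x)
      + lam • (ϱ (d2 a) a' (d1 x) + ϱ a (d2 a') (d1 x) + lam • ϱ (d2 a) (d2 a') (d1 x)) := by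
    intro a a' x
    have := DFunLike.congr_fun (hϱd a a') x
    simpa [Module.End.mul_apply, LinearMap.add_apply, LinearMap.smul_apply, smul_add] using this
  have H2 : ∀ x x' a, d2 (ρ x x' a) =
      ρ (d1 x) x' a + ρ x (d1 x') a + lam • ρ (d1 x) (d1 x') a + ρ x x' (d2 a)
      + lam • (ρ (d1 x) x' (d2 a) + ρ x (d1 x') (d2 a) + lam • ρ (d1 x) (d1 x') (d2 a)) := by
    intro x x' a
    have := DFunLike.congr_fun (hρd x x') a
    simpa [Module.End.mul_apply, LinearMap.add_apply, LinearMap.smul_apply, smul_add] using this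
  have hd1' : ∀ x y z, d1 (b1 x y z) =
      b1 (d1 x) y z + b1 x (d1 y) z + b1 x y (d1 z)
      + lam • (b1 (d1 x) (d1 y) z + b1 x (d1 y) (d1 z) + b1 (d1 x) y (d1 z))
      + lam ^ 2 • b1 (d1 x) (d1 y) (d1 z) := hd1
  have hd2' : ∀ x y z, d2 (b2 x y z) =
      b2 (d2 x) y z + b2 x (d2 y) z + b2 x y (d2 z)
      + lam • (b2 (d2 x) (d2 y) z + b2 x (d2 y) (d2 z) + b2 (d2 x) y (d2 z))
      + lam ^ 2 • b2 (d2 x) (d2 y) (d2 z) := hd2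
  simp only [hB, hD, Prod.mk_add_mk, Prod.smul_mk, Prod.mk.injEq]
  constructor
  · simp only [map_add, hd1', H1]
    module
  · simp only [map_add, hd2', H2]
    module
end

section
/- Let g be a 3-Lie algebra with representation (V,ρ). For x∧y ∈ g∧g define ρᴸ(x∧y)(f)(z) = ρ(x,y)f(z) − f([x,y,z]) and ρᴿ(x∧y)(f)(z) = f([x,y,z]) − ρ(x,y)f(z) − ρ(y,z)f(x) − ρ(z,x)f(y) on Hom(g,V). Then (Hom(g,V), ρᴸ, ρᴿ) is a representation of the Leibniz algebra L = g∧g with bracket [x₁∧x₂,y₁∧y₂]_F = [x₁,x₂,y₁]∧y₂ + y₁∧[x₁,x₂,y₂]: i.e. ρᴸ([X,Y]_F) = ρᴸ(X)ρᴸ(Y) − ρᴸ(Y)ρᴸ(X), ρᴿ([X,Y]_F) = ρᴸ(X)ρᴿ(Y) − ρᴿ(Y)ρᴸ(X), and ρᴿ(Y)ρᴸ(X) = −ρᴿ(Y)ρᴿ(X). -/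
/-- `(Hom(g,V), ρᴸ, ρᴿ)` is a representation of the Leibniz algebra
`L = g∧g` (the three Leibniz-representation axioms, written on the wedge generators
using `[x₁∧x₂, y₁∧y₂]_F = [x₁,x₂,y₁]∧y₂ + y₁∧[x₁,x₂,y₂]`). -/
theorem stmt19 {k : Type*} [Field k] [CharZero k] {g V : Type*} [AddCommGroup g] [Module k g]
    [AddCommGroup V] [Module k V]
    (b : g →ₗ[k] g →ₗ[k] g →ₗ[k] g)
    (ρ : g →ₗ[k] g →ₗ[k] Module.End k V)
    (hb : IsThreeLie b) (hρ : IsRep b ρ) :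
    ∀ (x₁ x₂ y₁ y₂ : g) (f : g →ₗ[k] V),
      (actL b ρ (b x₁ x₂ y₁) y₂ ⇑f + actL b ρ y₁ (b x₁ x₂ y₂) ⇑f =
        actL b ρ x₁ x₂ (actL b ρ y₁ y₂ ⇑f) - actL b ρ y₁ y₂ (actL b ρ x₁ x₂ ⇑f)) ∧
      (actR b ρ (b x₁ x₂ y₁) y₂ ⇑f + actR b ρ y₁ (b x₁ x₂ y₂) ⇑f =
        actL b ρ x₁ x₂ (actR b ρ y₁ y₂ ⇑f) - actR b ρ y₁ y₂ (actL b ρ x₁ x₂ ⇑f)) ∧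
      (actR b ρ y₁ y₂ (actL b ρ x₁ x₂ ⇑f) = - actR b ρ y₁ y₂ (actR b ρ x₁ x₂ ⇑f)) := by

  obtain ⟨hb1, hb2, hb3⟩ := hb
  obtain ⟨hr1, hr2, hr3⟩ := hρ
  intro x₁ x₂ y₁ y₂ f
  have HR2 : ∀ (a₁ a₂ a₃ a₄ : g) (v : V),
      ρ a₁ a₂ (ρ a₃ a₄ v) =
        ρ (b a₁ a₂ a₃) a₄ v + ρ a₃ (b a₁ a₂ a₄) v + ρ a₃ a₄ (ρ a₁ a₂ v) := by
    intro a₁ a₂ a₃ a₄ v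
    have := DFunLike.congr_fun (hr2 a₁ a₂ a₃ a₄) v
    simpa [Module.End.mul_apply] using this
  have HR3 : ∀ (a₁ a₂ a₃ a₄ : g) (v : V),
      ρ a₁ (b a₂ a₃ a₄) v =
        ρ a₃ a₄ (ρ a₁ a₂ v) - ρ a₂ a₄ (ρ a₁ a₃ v) + ρ a₂ a₃ (ρ a₁ a₄ v) := by
    intro a₁ a₂ a₃ a₄ v
    have := DFunLike.congr_fun (hr3 a₁ a₂ a₃ a₄) v
    simpa [Module.End.mul_apply] using this
  have HR1 : ∀ (a₁ a₂ : g) (v : V), ρ a₁ a₂ v = - ρ a₂ a₁ v := by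
    intro a₁ a₂ v
    have := DFunLike.congr_fun (hr1 a₁ a₂) v
    simpa using this
  have HFI : ∀ z : g, f (b x₁ x₂ (b y₁ y₂ z)) =
      f (b (b x₁ x₂ y₁) y₂ z) + f (b y₁ (b x₁ x₂ y₂) z) + f (b y₁ y₂ (b x₁ x₂ z)) := by
    intro z
    rw [hb3 x₁ x₂ y₁ y₂ z]
    simp [map_add]
  refine ⟨?_, ?_, ?_⟩
  · funext z
    simp only [actL, Pi.add_apply, Pi.sub_apply, map_sub]
    rw [HR2 x₁ x₂ y₁ y₂ (f z), HFI z]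
    abel
  · funext z
    simp only [actL, actR, Pi.add_apply, Pi.sub_apply, map_sub]
    rw [HR2 x₁ x₂ y₁ y₂ (f z), HFI z,
      HR2 x₁ x₂ y₂ z (f y₁), HR2 x₁ x₂ z y₁ (f y₂)]
    abel
  · funext z
    simp only [actL, actR, Pi.neg_apply, Pi.sub_apply, map_sub, neg_sub]
    rw [HR1 z y₁ (ρ x₂ y₂ (f x₁)), HR1 z y₁ (ρ y₂ x₁ (f x₂)),
      HR1 (b y₁ y₂ z) x₁ (f x₂), HR1 z x₁ (f x₂), HR1 y₁ x₁ (f x₂), HR1 y₂ x₁ (f x₂)]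
    rw [HR3 x₂ y₁ y₂ z (f x₁), HR3 x₁ y₁ y₂ z (f x₂)]
    simp only [map_neg]
    abel
end
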